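/- arXiv:1401.5338 — 7 statements merged into one kernel-verified Lean document; each statement's English description precedes it below -/
import Mathlib

section
/- Motzkin's Transposition Theorem (affine version): For matrices A ∈ K^{m×n}, C ∈ K^{ℓ×n} and vectors b ∈ K^m, d ∈ K^ℓ (K a linear ordered field such as ℝ), the statement '∀ x ∈ K^n, ¬(A x ≤ b ∧ C x < d)' holds if and only if there exist λ ∈ K^m, μ ∈ K^ℓ with λ ≥ 0, μ ≥ 0, λᵀA + μᵀC = 0, λᵀb + μᵀd ≤ 0, and (λᵀb < 0 ∨ μ ≠ 0). -/
open Matrix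

open Finset

theorem motzkin_sound {n : ℕ} {ι : Type} [Fintype ι] (a : ι → Fin n → ℝ) (β : ι → ℝ)
    (str : ι → Bool) (y : ι → ℝ) (hy0 : ∀ i, 0 ≤ y i)
    (hlin : ∀ k, ∑ i, y i * a i k = 0)
    (hb : ∑ i, y i * β i < 0 ∨ (∑ i, y i * β i ≤ 0 ∧ ∃ i, str i = true ∧ 0 < y i)) :
    ¬ ∃ x : Fin n → ℝ, ∀ i, if str i then ∑ k, a i k * x k < β i else ∑ k, a i k * x k ≤ β i := by
  rintro ⟨x, hx⟩
  have key : ∑ i, y i * (∑ k, a i k * x k) = 0 := by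
    have : ∑ i, y i * (∑ k, a i k * x k) = ∑ k, (∑ i, y i * a i k) * x k := by
      simp only [Finset.mul_sum, Finset.sum_mul]
      rw [Finset.sum_comm]
      exact Finset.sum_congr rfl (fun k _ => Finset.sum_congr rfl (fun i _ => by ring))
    rw [this]
    simp [hlin]
  have hle : ∀ i, y i * (∑ k, a i k * x k) ≤ y i * β i := by
    intro i
    have hxi := hx i
    have : ∑ k, a i k * x k ≤ β i := by
      by_cases hs : str i = true
      · rw [if_pos hs] at hxi; exact le_of_lt hxi
      · rw [if_neg hs] at hxi; exact hxi
    exact mul_le_mul_of_nonneg_left this (hy0 i)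
  rcases hb with hb | ⟨hb, i₀, hs, hpos⟩
  · have : (0:ℝ) ≤ ∑ i, y i * β i := key ▸ Finset.sum_le_sum (fun i _ => hle i)
    linarith
  · have hlt : ∑ i, y i * (∑ k, a i k * x k) < ∑ i, y i * β i := by
      apply Finset.sum_lt_sum (fun i _ => hle i)
      refine ⟨i₀, Finset.mem_univ _, ?_⟩
      have hxi := hx i₀
      rw [if_pos hs] at hxi
      exact mul_lt_mul_of_pos_left hxi hpos
    rw [key] at hlt
    linarith

theorem motzkin_hard : ∀ (n : ℕ) (ι : Type) [Fintype ι] (a : ι → Fin n → ℝ) (β : ι → ℝ)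
    (str : ι → Bool),
    (¬ ∃ x : Fin n → ℝ, ∀ i, if str i then ∑ k, a i k * x k < β i else ∑ k, a i k * x k ≤ β i) →
    ∃ y : ι → ℝ, (∀ i, 0 ≤ y i) ∧ (∀ k, ∑ i, y i * a i k = 0) ∧
      (∑ i, y i * β i < 0 ∨ (∑ i, y i * β i ≤ 0 ∧ ∃ i, str i = true ∧ 0 < y i)) := by
  intro n
  induction n with
  | zero =>
    intro ι _ a β str h
    classical
    push_neg at h
    obtain ⟨i₀, hi₀⟩ := h (fun _ => 0)
    refine ⟨fun i => if i = i₀ then 1 else 0, ?_, ?_, ?_⟩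
    · intro i
      rcases eq_or_ne i i₀ with hi | hi <;> simp [hi]
    · intro k; exact absurd k.2 (by simp)
    · have hsum : ∑ i, (if i = i₀ then (1:ℝ) else 0) * β i = β i₀ := by
        rw [Finset.sum_eq_single i₀]
        · simp
        · intro j _ hj; simp [hj]
        · simp
      by_cases hs : str i₀ = true
      · rw [if_pos hs] at hi₀
        push_neg at hi₀
        right
        simp only [Finset.univ_eq_empty, Finset.sum_empty] at hi₀
        refine ⟨by rw [hsum]; linarith, i₀, hs, by simp⟩
      · rw [if_neg hs] at hi₀
        push_neg at hi₀
        left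
        simp only [Finset.univ_eq_empty, Finset.sum_empty] at hi₀
        rw [hsum]; linarith
  | succ n ih =>
    intro ι _ a β str h
    classical
    -- Fourier-Motzkin elimination of variable 0
    have hnew : ¬ ∃ x' : Fin n → ℝ, ∀ q : ι ⊕ ι × ι,
        if (Sum.elim (fun i => if a i 0 = 0 then str i else false)
            (fun p => if 0 < a p.1 0 ∧ a p.2 0 < 0 then (str p.1 || str p.2) else false)) q then
          ∑ k, (Sum.elim (fun i => if a i 0 = 0 then (fun k => a i k.succ) else (0 : Fin n → ℝ))
            (fun p => if 0 < a p.1 0 ∧ a p.2 0 < 0 then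
              (fun k => (-(a p.2 0)) * a p.1 k.succ + a p.1 0 * a p.2 k.succ) else (0 : Fin n → ℝ))) q k * x' k
            < (Sum.elim (fun i => if a i 0 = 0 then β i else 0)
            (fun p => if 0 < a p.1 0 ∧ a p.2 0 < 0 then (-(a p.2 0)) * β p.1 + a p.1 0 * β p.2
              else 0)) q
        else
          ∑ k, (Sum.elim (fun i => if a i 0 = 0 then (fun k => a i k.succ) else (0 : Fin n → ℝ))
            (fun p => if 0 < a p.1 0 ∧ a p.2 0 < 0 then
              (fun k => (-(a p.2 0)) * a p.1 k.succ + a p.1 0 * a p.2 k.succ) else (0 : Fin n → ℝ))) q k * x' k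
            ≤ (Sum.elim (fun i => if a i 0 = 0 then β i else 0)
            (fun p => if 0 < a p.1 0 ∧ a p.2 0 < 0 then (-(a p.2 0)) * β p.1 + a p.1 0 * β p.2
              else 0)) q := by
      rintro ⟨x', hx'⟩
      apply h
      set D : ι → ℝ := fun i => ∑ k, a i k.succ * x' k with hDdef
      set U : ι → ℝ := fun i => (β i - D i) / a i 0 with hUdef
      -- constraints with zero coefficient
      have hz : ∀ i, a i 0 = 0 → (if str i then D i < β i else D i ≤ β i) := by
        intro i hi
        have hx'i := hx' (Sum.inl i)
        simp only [Sum.elim_inl, if_pos hi] at hx'i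
        exact hx'i
      -- pair constraints
      have hpair : ∀ i j, 0 < a i 0 → a j 0 < 0 →
          (if (str i || str j) then (-(a j 0)) * D i + a i 0 * D j < (-(a j 0)) * β i + a i 0 * β j
            else (-(a j 0)) * D i + a i 0 * D j ≤ (-(a j 0)) * β i + a i 0 * β j) := by
        intro i j hi hj
        have hx'p := hx' (Sum.inr (i, j))
        have hc : 0 < a i 0 ∧ a j 0 < 0 := ⟨hi, hj⟩
        simp only [Sum.elim_inr, if_pos hc] at hx'p
        have hsum : ∑ k, ((-(a j 0)) * a i k.succ + a i 0 * a j k.succ) * x' k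
            = (-(a j 0)) * D i + a i 0 * D j := by
          simp only [hDdef, Finset.mul_sum, add_mul, Finset.sum_add_distrib]
          congr 1 <;> exact Finset.sum_congr rfl (fun k _ => by ring)
        rw [hsum] at hx'p
        exact hx'p
      have hUe : ∀ j, a j 0 < 0 → U j = (D j - β j) / (-(a j 0)) := by
        intro j _
        rw [hUdef, div_neg, ← neg_div, neg_sub]
      have hUle : ∀ i j, 0 < a i 0 → a j 0 < 0 → U j ≤ U i := by
        intro i j hi hj
        have hp := hpair i j hi hj
        have hple : (-(a j 0)) * D i + a i 0 * D j ≤ (-(a j 0)) * β i + a i 0 * β j := by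
          by_cases hs : (str i || str j) = true
          · rw [if_pos hs] at hp; exact le_of_lt hp
          · rw [if_neg hs] at hp; exact hp
        rw [hUe j hj, hUdef]
        rw [div_le_div_iff₀ (by linarith) hi]
        nlinarith
      have hUlt : ∀ i j, 0 < a i 0 → a j 0 < 0 → (str i = true ∨ str j = true) → U j < U i := by
        intro i j hi hj hs
        have hp := hpair i j hi hj
        have hs' : (str i || str j) = true := by
          rcases hs with hs | hs <;> simp [hs]
        rw [if_pos hs'] at hp
        rw [hUe j hj, hUdef]
        rw [div_lt_div_iff₀ (by linarith) hi]
        nlinarith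
      -- choose x₀
      obtain ⟨x₀, hx₀P, hx₀N⟩ : ∃ x₀ : ℝ,
          (∀ i, 0 < a i 0 → (if str i then x₀ < U i else x₀ ≤ U i)) ∧
          (∀ j, a j 0 < 0 → (if str j then U j < x₀ else U j ≤ x₀)) := by
        by_cases hP : (Finset.univ.filter fun i => 0 < a i 0).Nonempty
        · by_cases hN : (Finset.univ.filter fun j => a j 0 < 0).Nonempty
          · set Us := (Finset.univ.filter fun i => 0 < a i 0).inf' hP U with hUs
            set Ls := (Finset.univ.filter fun j => a j 0 < 0).sup' hN U with hLs
            have hLU : Ls ≤ Us := by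
              apply Finset.sup'_le
              intro j hj
              apply Finset.le_inf'
              intro i hi
              exact hUle i j (Finset.mem_filter.mp hi).2 (Finset.mem_filter.mp hj).2
            rcases eq_or_lt_of_le hLU with heq | hlt
            · refine ⟨Us, ?_, ?_⟩
              · intro i hi
                have hmem : i ∈ Finset.univ.filter fun i => 0 < a i 0 :=
                  Finset.mem_filter.mpr ⟨Finset.mem_univ _, hi⟩
                by_cases hs : str i = true
                · rw [if_pos hs]
                  obtain ⟨j, hjmem, hj⟩ := Finset.exists_mem_eq_sup' hN U
                  have hjneg := (Finset.mem_filter.mp hjmem).2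
                  have := hUlt i j hi hjneg (Or.inl hs)
                  calc Us = Ls := heq.symm
                  _ = U j := hj
                  _ < U i := this
                · rw [if_neg hs]
                  exact Finset.inf'_le U hmem
              · intro j hj
                have hmem : j ∈ Finset.univ.filter fun j => a j 0 < 0 :=
                  Finset.mem_filter.mpr ⟨Finset.mem_univ _, hj⟩
                by_cases hs : str j = true
                · rw [if_pos hs]
                  obtain ⟨i, himem, hi⟩ := Finset.exists_mem_eq_inf' hP U
                  have hipos := (Finset.mem_filter.mp himem).2
                  have := hUlt i j hipos hj (Or.inr hs)
                  calc U j < U i := this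
                  _ = Us := hi.symm
                · rw [if_neg hs]
                  rw [← heq]
                  exact Finset.le_sup' U hmem
            · refine ⟨(Ls + Us) / 2, ?_, ?_⟩
              · intro i hi
                have hmem : i ∈ Finset.univ.filter fun i => 0 < a i 0 :=
                  Finset.mem_filter.mpr ⟨Finset.mem_univ _, hi⟩
                have h1 : Us ≤ U i := Finset.inf'_le U hmem
                split_ifs <;> linarith
              · intro j hj
                have hmem : j ∈ Finset.univ.filter fun j => a j 0 < 0 :=
                  Finset.mem_filter.mpr ⟨Finset.mem_univ _, hj⟩
                have h1 : U j ≤ Ls := Finset.le_sup' U hmem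
                split_ifs <;> linarith
          · refine ⟨(Finset.univ.filter fun i => 0 < a i 0).inf' hP U - 1, ?_, ?_⟩
            · intro i hi
              have hmem : i ∈ Finset.univ.filter fun i => 0 < a i 0 :=
                Finset.mem_filter.mpr ⟨Finset.mem_univ _, hi⟩
              have h1 := Finset.inf'_le U hmem
              split_ifs <;> linarith
            · intro j hj
              exact absurd ⟨j, Finset.mem_filter.mpr ⟨Finset.mem_univ _, hj⟩⟩ hN
        · by_cases hN : (Finset.univ.filter fun j => a j 0 < 0).Nonempty
          · refine ⟨(Finset.univ.filter fun j => a j 0 < 0).sup' hN U + 1, ?_, ?_⟩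
            · intro i hi
              exact absurd ⟨i, Finset.mem_filter.mpr ⟨Finset.mem_univ _, hi⟩⟩ hP
            · intro j hj
              have hmem : j ∈ Finset.univ.filter fun j => a j 0 < 0 :=
                Finset.mem_filter.mpr ⟨Finset.mem_univ _, hj⟩
              have h1 := Finset.le_sup' U hmem
              split_ifs <;> linarith
          · refine ⟨0, ?_, ?_⟩
            · intro i hi
              exact absurd ⟨i, Finset.mem_filter.mpr ⟨Finset.mem_univ _, hi⟩⟩ hP
            · intro j hj
              exact absurd ⟨j, Finset.mem_filter.mpr ⟨Finset.mem_univ _, hj⟩⟩ hN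
      -- assemble the solution
      refine ⟨Fin.cons x₀ x', ?_⟩
      intro i
      have hsum : ∑ k : Fin (n+1), a i k * (Fin.cons x₀ x' : Fin (n+1) → ℝ) k
          = a i 0 * x₀ + D i := by
        rw [Fin.sum_univ_succ]
        simp [hDdef]
      rcases lt_trichotomy (a i 0) 0 with hneg | hzero | hpos
      · have hN := hx₀N i hneg
        have hane : a i 0 ≠ 0 := ne_of_lt hneg
        have hrw : ∀ z : ℝ, U i < z ↔ a i 0 * z + D i < β i := by
          intro z
          rw [hUe i hneg, div_lt_iff₀ (by linarith : (0:ℝ) < -(a i 0))]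
          constructor <;> intro <;> nlinarith
        have hrw' : ∀ z : ℝ, U i ≤ z ↔ a i 0 * z + D i ≤ β i := by
          intro z
          rw [hUe i hneg, div_le_iff₀ (by linarith : (0:ℝ) < -(a i 0))]
          constructor <;> intro <;> nlinarith
        split_ifs with hs
        · rw [if_pos hs] at hN
          rw [hsum]
          exact (hrw x₀).mp hN
        · rw [if_neg hs] at hN
          rw [hsum]
          exact (hrw' x₀).mp hN
      · have hzi := hz i hzero
        rw [hsum, hzero, zero_mul, zero_add]
        exact hzi
      · have hP := hx₀P i hpos
        have hrw : ∀ z : ℝ, z < U i ↔ a i 0 * z + D i < β i := by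
          intro z
          rw [hUdef, lt_div_iff₀ hpos]
          constructor <;> intro <;> nlinarith
        have hrw' : ∀ z : ℝ, z ≤ U i ↔ a i 0 * z + D i ≤ β i := by
          intro z
          rw [hUdef, le_div_iff₀ hpos]
          constructor <;> intro <;> nlinarith
        split_ifs with hs
        · rw [if_pos hs] at hP
          rw [hsum]
          exact (hrw x₀).mp hP
        · rw [if_neg hs] at hP
          rw [hsum]
          exact (hrw' x₀).mp hP
    obtain ⟨y', hy'0, hy'lin, hy'b⟩ := ih (ι ⊕ ι × ι) _ _ _ hnew
    set y : ι → ℝ := fun i => (if a i 0 = 0 then y' (Sum.inl i) else 0)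
      + (∑ j, if 0 < a i 0 ∧ a j 0 < 0 then (-(a j 0)) * y' (Sum.inr (i, j)) else 0)
      + (∑ j, if 0 < a j 0 ∧ a i 0 < 0 then a j 0 * y' (Sum.inr (j, i)) else 0) with hydef
    have hsplit : ∀ (g : ι ⊕ ι × ι → ℝ), ∑ q : ι ⊕ ι × ι, y' q * g q =
        (∑ i, y' (Sum.inl i) * g (Sum.inl i))
        + ∑ i, ∑ j, y' (Sum.inr (i, j)) * g (Sum.inr (i, j)) := by
      intro g
      rw [Fintype.sum_sum_type]
      congr 1
      rw [Fintype.sum_prod_type]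
    have hclaim : ∀ w : ι → ℝ, ∑ i, y i * w i =
        (∑ i, if a i 0 = 0 then y' (Sum.inl i) * w i else 0)
        + ∑ i, ∑ j, (if 0 < a i 0 ∧ a j 0 < 0 then
            y' (Sum.inr (i, j)) * ((-(a j 0)) * w i + a i 0 * w j) else 0) := by
      intro w
      have hswap : ∑ i, ∑ j, (if 0 < a j 0 ∧ a i 0 < 0 then
            a j 0 * y' (Sum.inr (j, i)) * w i else 0)
          = ∑ i, ∑ j, (if 0 < a i 0 ∧ a j 0 < 0 then
            a i 0 * y' (Sum.inr (i, j)) * w j else 0) := by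
        rw [Finset.sum_comm]
      simp only [hydef, add_mul, Finset.sum_add_distrib, Finset.sum_mul, ite_mul, zero_mul]
      rw [add_assoc, hswap, ← Finset.sum_add_distrib]
      congr 1
      refine Finset.sum_congr rfl (fun i _ => ?_)
      rw [← Finset.sum_add_distrib]
      refine Finset.sum_congr rfl (fun j _ => ?_)
      split_ifs with hc
      · ring
      · ring
    have hy0 : ∀ i, 0 ≤ y i := by
      intro i
      have h1 : 0 ≤ (if a i 0 = 0 then y' (Sum.inl i) else 0) := by
        split_ifs
        · exact hy'0 _
        · exact le_refl 0
      have h2 : 0 ≤ ∑ j, (if 0 < a i 0 ∧ a j 0 < 0 then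
          (-(a j 0)) * y' (Sum.inr (i, j)) else 0) := by
        apply Finset.sum_nonneg
        intro j _
        split_ifs with hc
        · have := hy'0 (Sum.inr (i, j))
          nlinarith [hc.2]
        · exact le_refl 0
      have h3 : 0 ≤ ∑ j, (if 0 < a j 0 ∧ a i 0 < 0 then
          a j 0 * y' (Sum.inr (j, i)) else 0) := by
        apply Finset.sum_nonneg
        intro j _
        split_ifs with hc
        · have := hy'0 (Sum.inr (j, i))
          nlinarith [hc.1]
        · exact le_refl 0
      rw [hydef]
      dsimp only
      linarith
    have hlin : ∀ k : Fin (n + 1), ∑ i, y i * a i k = 0 := by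
      intro k
      refine Fin.cases ?_ ?_ k
      · rw [hclaim (fun i => a i 0)]
        have h1 : (∑ i, if a i 0 = 0 then y' (Sum.inl i) * a i 0 else 0) = 0 := by
          apply Finset.sum_eq_zero
          intro i _
          split_ifs with hc
          · rw [hc, mul_zero]
          · rfl
        have h2 : (∑ i, ∑ j, if 0 < a i 0 ∧ a j 0 < 0 then
            y' (Sum.inr (i, j)) * ((-(a j 0)) * a i 0 + a i 0 * a j 0) else 0) = 0 := by
          apply Finset.sum_eq_zero
          intro i _
          apply Finset.sum_eq_zero
          intro j _
          split_ifs with hc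
          · rw [show (-(a j 0)) * a i 0 + a i 0 * a j 0 = 0 by ring, mul_zero]
          · rfl
        rw [h1, h2, add_zero]
      · intro k'
        rw [hclaim (fun i => a i k'.succ)]
        have hthis := hy'lin k'
        rw [hsplit] at hthis
        simp only [Sum.elim_inl, Sum.elim_inr, ite_apply, Pi.zero_apply, mul_ite, mul_zero]
          at hthis
        exact hthis
    have hbeq : ∑ i, y i * β i = ∑ q : ι ⊕ ι × ι, y' q *
        (Sum.elim (fun i => if a i 0 = 0 then β i else 0)
          (fun p => if 0 < a p.1 0 ∧ a p.2 0 < 0 then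
            (-(a p.2 0)) * β p.1 + a p.1 0 * β p.2 else 0)) q := by
      rw [hclaim β, hsplit]
      simp only [Sum.elim_inl, Sum.elim_inr, mul_ite, mul_zero]
    refine ⟨y, hy0, hlin, ?_⟩
    rcases hy'b with hlt | ⟨hle, q₀, hS, hpos⟩
    · left
      rw [hbeq]
      exact hlt
    · right
      constructor
      · rw [hbeq]
        exact hle
      · -- transfer the strict witness
        rcases q₀ with i | ⟨i, j⟩
        · simp only [Sum.elim_inl] at hS
          by_cases hc : a i 0 = 0
          · rw [if_pos hc] at hS
            refine ⟨i, hS, ?_⟩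
            have h2 : 0 ≤ ∑ j, (if 0 < a i 0 ∧ a j 0 < 0 then
                (-(a j 0)) * y' (Sum.inr (i, j)) else 0) := by
              apply Finset.sum_nonneg
              intro j _
              split_ifs with hc'
              · have := hy'0 (Sum.inr (i, j)); nlinarith [hc'.2]
              · exact le_refl 0
            have h3 : 0 ≤ ∑ j, (if 0 < a j 0 ∧ a i 0 < 0 then
                a j 0 * y' (Sum.inr (j, i)) else 0) := by
              apply Finset.sum_nonneg
              intro j _
              split_ifs with hc'
              · have := hy'0 (Sum.inr (j, i)); nlinarith [hc'.1]
              · exact le_refl 0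
            rw [hydef]
            dsimp only
            rw [if_pos hc]
            linarith
          · rw [if_neg hc] at hS
            exact absurd hS (by simp)
        · simp only [Sum.elim_inr] at hS
          by_cases hc : 0 < a i 0 ∧ a j 0 < 0
          · rw [if_pos hc] at hS
            rcases Bool.or_eq_true_iff.mp hS with hs | hs
            · refine ⟨i, hs, ?_⟩
              have h1 : 0 ≤ (if a i 0 = 0 then y' (Sum.inl i) else 0) := by
                split_ifs
                · exact hy'0 _
                · exact le_refl 0
              have h3 : 0 ≤ ∑ j', (if 0 < a j' 0 ∧ a i 0 < 0 then
                  a j' 0 * y' (Sum.inr (j', i)) else 0) := by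
                apply Finset.sum_nonneg
                intro j' _
                split_ifs with hc'
                · have := hy'0 (Sum.inr (j', i)); nlinarith [hc'.1]
                · exact le_refl 0
              have h2 : (-(a j 0)) * y' (Sum.inr (i, j)) ≤
                  ∑ j', (if 0 < a i 0 ∧ a j' 0 < 0 then
                    (-(a j' 0)) * y' (Sum.inr (i, j')) else 0) := by
                have := Finset.single_le_sum (f := fun j' => if 0 < a i 0 ∧ a j' 0 < 0 then
                    (-(a j' 0)) * y' (Sum.inr (i, j')) else 0)
                  (fun j' _ => by
                    split_ifs with hc'
                    · have := hy'0 (Sum.inr (i, j')); nlinarith [hc'.2]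
                    · exact le_refl 0) (Finset.mem_univ j)
                rw [if_pos hc] at this
                exact this
              have hterm : 0 < (-(a j 0)) * y' (Sum.inr (i, j)) := by
                have := hc.2
                nlinarith
              rw [hydef]
              dsimp only
              linarith
            · refine ⟨j, hs, ?_⟩
              have h1 : 0 ≤ (if a j 0 = 0 then y' (Sum.inl j) else 0) := by
                split_ifs
                · exact hy'0 _
                · exact le_refl 0
              have h2 : 0 ≤ ∑ j', (if 0 < a j 0 ∧ a j' 0 < 0 then
                  (-(a j' 0)) * y' (Sum.inr (j, j')) else 0) := by
                apply Finset.sum_nonneg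
                intro j' _
                split_ifs with hc'
                · have := hy'0 (Sum.inr (j, j')); nlinarith [hc'.2]
                · exact le_refl 0
              have h3 : a i 0 * y' (Sum.inr (i, j)) ≤
                  ∑ j', (if 0 < a j' 0 ∧ a j 0 < 0 then
                    a j' 0 * y' (Sum.inr (j', j)) else 0) := by
                have := Finset.single_le_sum (f := fun j' => if 0 < a j' 0 ∧ a j 0 < 0 then
                    a j' 0 * y' (Sum.inr (j', j)) else 0)
                  (fun j' _ => by
                    split_ifs with hc'
                    · have := hy'0 (Sum.inr (j', j)); nlinarith [hc'.1]
                    · exact le_refl 0) (Finset.mem_univ i)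
                rw [if_pos hc] at this
                exact this
              have hterm : 0 < a i 0 * y' (Sum.inr (i, j)) := by
                have := hc.1
                nlinarith
              rw [hydef]
              dsimp only
              linarith
          · rw [if_neg hc] at hS
            exact absurd hS (by simp)

theorem motzkin_transposition (m n l : ℕ)
    (A : Matrix (Fin m) (Fin n) ℝ) (C : Matrix (Fin l) (Fin n) ℝ)
    (b : Fin m → ℝ) (d : Fin l → ℝ) :
    (∀ x : Fin n → ℝ, ¬ ((∀ i, A.mulVec x i ≤ b i) ∧ (∀ j, C.mulVec x j < d j))) ↔
    (∃ lam : Fin m → ℝ, ∃ mu : Fin l → ℝ,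
      (∀ i, 0 ≤ lam i) ∧ (∀ j, 0 ≤ mu j) ∧
      A.vecMul lam + C.vecMul mu = 0 ∧
      lam ⬝ᵥ b + mu ⬝ᵥ d ≤ 0 ∧
      (lam ⬝ᵥ b < 0 ∨ mu ≠ 0)) := by
  classical
  constructor
  · intro h
    have h' : ¬ ∃ x : Fin n → ℝ, ∀ q : Fin m ⊕ Fin l,
        if (Sum.elim (fun _ => false) (fun _ => true) : Fin m ⊕ Fin l → Bool) q then
          ∑ k, (Sum.elim (fun i => A i) (fun j => C j)) q k * x k < Sum.elim b d q
        else ∑ k, (Sum.elim (fun i => A i) (fun j => C j)) q k * x k ≤ Sum.elim b d q := by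
      rintro ⟨x, hx⟩
      apply h x
      constructor
      · intro i
        have hxi := hx (Sum.inl i)
        simpa [Matrix.mulVec, dotProduct] using hxi
      · intro j
        have hxj := hx (Sum.inr j)
        simpa [Matrix.mulVec, dotProduct] using hxj
    obtain ⟨y, hy0, hylin, hyb⟩ := motzkin_hard n (Fin m ⊕ Fin l) _ _ _ h'
    refine ⟨fun i => y (Sum.inl i), fun j => y (Sum.inr j), fun i => hy0 _, fun j => hy0 _,
      ?_, ?_, ?_⟩
    · funext k
      have hk := hylin k
      rw [Fintype.sum_sum_type] at hk
      simp only [Sum.elim_inl, Sum.elim_inr] at hk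
      simp only [Pi.add_apply, Matrix.vecMul, dotProduct, Pi.zero_apply]
      convert hk using 2
    · have hT : ∑ q : Fin m ⊕ Fin l, y q * Sum.elim b d q =
          (fun i => y (Sum.inl i)) ⬝ᵥ b + (fun j => y (Sum.inr j)) ⬝ᵥ d := by
        rw [Fintype.sum_sum_type]
        simp [dotProduct]
      rcases hyb with hlt | ⟨hle, _⟩
      · rw [hT] at hlt; linarith
      · rw [hT] at hle; exact hle
    · have hT : ∑ q : Fin m ⊕ Fin l, y q * Sum.elim b d q =
          (fun i => y (Sum.inl i)) ⬝ᵥ b + (fun j => y (Sum.inr j)) ⬝ᵥ d := by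
        rw [Fintype.sum_sum_type]
        simp [dotProduct]
      rcases hyb with hlt | ⟨hle, q, hq, hqpos⟩
      · by_cases hmu : (fun j => y (Sum.inr j)) = 0
        · left
          rw [hT] at hlt
          have : (fun j => y (Sum.inr j)) ⬝ᵥ d = 0 := by rw [hmu]; simp
          linarith
        · right; exact hmu
      · rcases q with i | j
        · simp at hq
        · right
          intro hmu
          have : y (Sum.inr j) = 0 := congrFun hmu j
          rw [this] at hqpos
          exact lt_irrefl 0 hqpos
  · rintro ⟨lam, mu, hlam, hmu, hAC, hbd, hor⟩
    intro x ⟨h1, h2⟩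
    have hlin : ∀ k : Fin n, ∑ q : Fin m ⊕ Fin l,
        Sum.elim lam mu q * (Sum.elim (fun i => A i) (fun j => C j)) q k = 0 := by
      intro k
      have := congrFun hAC k
      simp only [Pi.add_apply, Matrix.vecMul, dotProduct, Pi.zero_apply] at this
      rw [Fintype.sum_sum_type]
      simp only [Sum.elim_inl, Sum.elim_inr]
      convert this using 2
    have hT : ∑ q : Fin m ⊕ Fin l, Sum.elim lam mu q * Sum.elim b d q =
        lam ⬝ᵥ b + mu ⬝ᵥ d := by
      rw [Fintype.sum_sum_type]
      simp [dotProduct]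
    have hcert : ∑ q : Fin m ⊕ Fin l, Sum.elim lam mu q * Sum.elim b d q < 0 ∨
        (∑ q : Fin m ⊕ Fin l, Sum.elim lam mu q * Sum.elim b d q ≤ 0 ∧
          ∃ q, (Sum.elim (fun _ => false) (fun _ => true) : Fin m ⊕ Fin l → Bool) q = true ∧
            0 < Sum.elim lam mu q) := by
      by_cases hmu0 : mu = 0
      · left
        rw [hT]
        rcases hor with hlb | hne
        · have : mu ⬝ᵥ d = 0 := by rw [hmu0]; simp
          linarith
        · exact absurd hmu0 hne
      · right
        refine ⟨hT ▸ hbd, ?_⟩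
        obtain ⟨j, hj⟩ := Function.ne_iff.mp hmu0
        refine ⟨Sum.inr j, rfl, ?_⟩
        simp only [Sum.elim_inr]
        exact lt_of_le_of_ne (hmu j) (Ne.symm hj)
    have := motzkin_sound (Sum.elim (fun i => A i) (fun j => C j)) (Sum.elim b d)
      (Sum.elim (fun _ => false) (fun _ => true)) (Sum.elim lam mu)
      (fun q => by rcases q with i | j
                   · exact hlam i
                   · exact hmu j) hlin hcert
    apply this
    refine ⟨x, fun q => ?_⟩
    rcases q with i | j
    · simp only [Sum.elim_inl]
      have := h1 i
      simpa [Matrix.mulVec, dotProduct] using this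
    · simp only [Sum.elim_inr]
      have := h2 j
      simpa [Matrix.mulVec, dotProduct] using this
end

section
/- Farkas' Lemma (affine version) as a special case of Motzkin: For A ∈ ℝ^{m×n}, b ∈ ℝ^m, c ∈ ℝ^n, δ ∈ ℝ, if the system A x ≤ b is satisfiable, then (∀ x, A x ≤ b → cᵀx ≤ δ) holds iff there exists λ ∈ ℝ^m with λ ≥ 0, λᵀA = cᵀ, and λᵀb ≤ δ. -/
open Matrix Finset
open scoped RealInnerProductSpace

lemma cone_finset_closed {E : Type*} [NormedAddCommGroup E] [NormedSpace ℝ E]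
    [FiniteDimensional ℝ E] {ι : Type*} [Fintype ι] [DecidableEq ι]
    (v : ι → E) (s : Finset ι) :
    IsClosed {x : E | ∃ l : ι → ℝ, (∀ i, 0 ≤ l i) ∧ x = ∑ i ∈ s, l i • v i} := by
  induction s using Finset.strongInduction with
  | _ s ih =>
  by_cases hli : LinearIndependent ℝ (fun i : {i // i ∈ s} => v i)
  · set f : ({i // i ∈ s} → ℝ) →ₗ[ℝ] E :=
      Fintype.linearCombination ℝ (fun i : {i // i ∈ s} => v i) with hf
    have hker : LinearMap.ker f = ⊥ := by
      rw [LinearMap.ker_eq_bot']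
      intro g hg
      have := Fintype.linearIndependent_iff.mp hli g
        (by simpa [hf, Fintype.linearCombination_apply] using hg)
      funext i; exact this i
    have hset : {x : E | ∃ l : ι → ℝ, (∀ i, 0 ≤ l i) ∧ x = ∑ i ∈ s, l i • v i}
        = f '' {g | ∀ i, 0 ≤ g i} := by
      ext x
      constructor
      · rintro ⟨l, hl, rfl⟩
        refine ⟨fun i => l i, fun i => hl i, ?_⟩
        rw [hf, Fintype.linearCombination_apply]
        rw [← Finset.sum_attach s (fun i => l i • v i)]
        rfl
      · rintro ⟨g, hg, rfl⟩
        refine ⟨fun i => if h : i ∈ s then g ⟨i, h⟩ else 0, ?_, ?_⟩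
        · intro i; by_cases h : i ∈ s
          · simpa [h] using hg ⟨i, h⟩
          · simp [h]
        · rw [hf, Fintype.linearCombination_apply]
          rw [← Finset.sum_attach s (fun i => (if h : i ∈ s then g ⟨i, h⟩ else 0) • v i)]
          refine Finset.sum_congr rfl fun i _ => ?_
          simp [i.2]
    rw [hset]
    have hcl : IsClosed {g : {i // i ∈ s} → ℝ | ∀ i, 0 ≤ g i} := by
      have : {g : {i // i ∈ s} → ℝ | ∀ i, 0 ≤ g i} = ⋂ i, {g | 0 ≤ g i} := by
        ext; simp [Set.mem_iInter]
      rw [this]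
      exact isClosed_iInter fun i => isClosed_le continuous_const (continuous_apply i)
    exact (f.isClosedEmbedding_of_injective hker).isClosedMap _ hcl
  · have key : ∀ g : ι → ℝ, (∑ i ∈ s, g i • v i = 0) → (∃ i ∈ s, 0 < g i) →
        IsClosed {x : E | ∃ l : ι → ℝ, (∀ i, 0 ≤ l i) ∧ x = ∑ i ∈ s, l i • v i} := by
      intro g hsum hpos
      have hset : {x : E | ∃ l : ι → ℝ, (∀ i, 0 ≤ l i) ∧ x = ∑ i ∈ s, l i • v i}
          = ⋃ i ∈ s.filter (fun i => 0 < g i),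
              {x : E | ∃ l : ι → ℝ, (∀ j, 0 ≤ l j) ∧ x = ∑ j ∈ s.erase i, l j • v j} := by
        ext x
        constructor
        · rintro ⟨l, hl, rfl⟩
          have hPne : (s.filter (fun i => 0 < g i)).Nonempty := by
            obtain ⟨i, his, hgi⟩ := hpos
            exact ⟨i, Finset.mem_filter.mpr ⟨his, hgi⟩⟩
          obtain ⟨i₀, hi₀P, hmin⟩ :=
            Finset.exists_min_image _ (fun i => l i / g i) hPne
          have hgi₀ : 0 < g i₀ := (Finset.mem_filter.mp hi₀P).2
          set t := l i₀ / g i₀ with htdef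
          have ht : 0 ≤ t := div_nonneg (hl i₀) hgi₀.le
          set l' : ι → ℝ := fun j => if j ∈ s then l j - t * g j else l j with hl'def
          have hl'nonneg : ∀ j, 0 ≤ l' j := by
            intro j
            by_cases hj : j ∈ s
            · simp only [hl'def, if_pos hj]
              rcases le_or_gt (g j) 0 with hgj | hgj
              · have : t * g j ≤ 0 := mul_nonpos_of_nonneg_of_nonpos ht hgj
                linarith [hl j]
              · have hjP : j ∈ s.filter (fun i => 0 < g i) := Finset.mem_filter.mpr ⟨hj, hgj⟩
                have := hmin j hjP
                rw [htdef, div_le_div_iff₀ hgi₀ hgj] at this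
                have h2 : t * g j ≤ l j := by
                  rw [htdef, div_mul_eq_mul_div, div_le_iff₀ hgi₀]
                  linarith
                linarith
            · simpa [hl'def, if_neg hj] using hl j
          have hl'i₀ : l' i₀ = 0 := by
            simp only [hl'def, if_pos (Finset.mem_filter.mp hi₀P).1, htdef]
            field_simp
            ring
          have hsum' : ∑ j ∈ s.erase i₀, l' j • v j = ∑ j ∈ s, l j • v j := by
            rw [Finset.sum_erase _ (by rw [hl'i₀]; exact zero_smul ℝ _)]
            have : ∑ j ∈ s, l' j • v j = ∑ j ∈ s, (l j • v j - t • (g j • v j)) := by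
              refine Finset.sum_congr rfl fun j hj => ?_
              simp [hl'def, if_pos hj, sub_smul, smul_smul]
            rw [this, Finset.sum_sub_distrib, ← Finset.smul_sum, hsum, smul_zero, sub_zero]
          exact Set.mem_biUnion hi₀P ⟨l', hl'nonneg, hsum'.symm⟩
        · intro hx
          obtain ⟨i, hiP, l, hl, rfl⟩ := Set.mem_iUnion₂.mp hx
          have his : i ∈ s := (Finset.mem_filter.mp hiP).1
          refine ⟨fun j => if j = i then 0 else l j,
            fun j => by by_cases h : j = i <;> simp [h, hl j], ?_⟩
          rw [← Finset.add_sum_erase _ _ his]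
          simp only [eq_self_iff_true, if_true, zero_smul, zero_add]
          symm
          refine Finset.sum_congr rfl fun j hj => ?_
          rw [if_neg (Finset.ne_of_mem_erase hj)]
      rw [hset]
      exact Set.Finite.isClosed_biUnion (Finset.finite_toSet _)
        fun i hi => ih (s.erase i) (Finset.erase_ssubset (by simpa using (Finset.mem_filter.mp hi).1))
    obtain ⟨g₀, hg₀sum, i₁, hi₁⟩ := Fintype.not_linearIndependent_iff.mp hli
    set g : ι → ℝ := fun i => if h : i ∈ s then g₀ ⟨i, h⟩ else 0 with hgdef
    have hgsum : ∑ i ∈ s, g i • v i = 0 := by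
      rw [← Finset.sum_attach s (fun i => g i • v i)]
      rw [← hg₀sum]
      refine Finset.sum_congr rfl fun i _ => ?_
      simp [hgdef, i.2]
    rcases lt_or_gt_of_ne hi₁ with hneg | hposi
    · refine key (-g) (by simpa using hgsum) ⟨i₁, i₁.2, ?_⟩
      simp only [hgdef, Pi.neg_apply, dif_pos i₁.2]
      simpa using hneg
    · refine key g hgsum ⟨i₁, i₁.2, ?_⟩
      simp only [hgdef, dif_pos i₁.2]
      simpa using hposi

lemma cone_sep {N : ℕ} {ι : Type*} [Fintype ι] [DecidableEq ι]
    (v : ι → EuclideanSpace ℝ (Fin N)) (z : EuclideanSpace ℝ (Fin N))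
    (hz : ¬ ∃ l : ι → ℝ, (∀ i, 0 ≤ l i) ∧ z = ∑ i, l i • v i) :
    ∃ y : EuclideanSpace ℝ (Fin N), (∀ i, 0 ≤ ⟪v i, y⟫) ∧ ⟪y, z⟫ < 0 := by
  set C : Set (EuclideanSpace ℝ (Fin N)) :=
    {x | ∃ l : ι → ℝ, (∀ i, 0 ≤ l i) ∧ x = ∑ i, l i • v i} with hC
  have Ksmul : ∀ ⦃a : ℝ⦄, 0 < a → ∀ ⦃x⦄, x ∈ C → a • x ∈ C := by
    rintro a ha x ⟨l, hl, rfl⟩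
    exact ⟨fun i => a * l i, fun i => mul_nonneg ha.le (hl i), by
      rw [Finset.smul_sum]; exact Finset.sum_congr rfl fun i _ => smul_smul a (l i) (v i)⟩
  have Kadd : ∀ ⦃x⦄, x ∈ C → ∀ ⦃y⦄, y ∈ C → x + y ∈ C := by
    rintro x ⟨l, hl, rfl⟩ y ⟨l', hl', rfl⟩
    exact ⟨fun i => l i + l' i, fun i => add_nonneg (hl i) (hl' i), by
      rw [← Finset.sum_add_distrib]
      exact Finset.sum_congr rfl fun i _ => (add_smul (l i) (l' i) (v i)).symm⟩
  let K : ConvexCone ℝ (EuclideanSpace ℝ (Fin N)) :=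
    { carrier := C, smul_mem' := Ksmul, add_mem' := Kadd }
  have hne : (K : Set (EuclideanSpace ℝ (Fin N))).Nonempty :=
    ⟨0, ⟨fun _ => 0, fun i => le_refl 0, by simp⟩⟩
  have hcl : IsClosed (K : Set (EuclideanSpace ℝ (Fin N))) := by
    have := cone_finset_closed v (Finset.univ : Finset ι)
    exact this
  have hzK : z ∉ K := hz
  let P : ProperCone ℝ (EuclideanSpace ℝ (Fin N)) :=
    { carrier := C
      add_mem' := fun hx hy => Kadd hx hy
      zero_mem' := ⟨fun _ => 0, fun i => le_refl 0, by simp⟩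
      smul_mem' := by
        rintro c x ⟨l, hl, rfl⟩
        exact ⟨fun i => (c : ℝ) * l i, fun i => mul_nonneg c.2 (hl i), by
          show (c : ℝ) • (∑ i, l i • v i) = ∑ i, ((c : ℝ) * l i) • v i
          rw [Finset.smul_sum]; exact Finset.sum_congr rfl fun i _ => smul_smul (c : ℝ) (l i) (v i)⟩
      isClosed' := hcl }
  obtain ⟨y, hy1, hy2⟩ := P.hyperplane_separation' (x₀ := z) hzK
  refine ⟨y, fun i => ?_, by rw [real_inner_comm]; exact hy2⟩
  apply hy1
  show v i ∈ C
  refine ⟨fun j => if j = i then 1 else 0, fun j => by positivity, ?_⟩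
  simp only [ite_smul, one_smul, zero_smul]
  rw [Finset.sum_ite_eq' Finset.univ i v]
  simp

variable {n : ℕ}

def fvec (x : Fin n → ℝ) (r : ℝ) : EuclideanSpace ℝ (Fin (n + 1)) :=
  WithLp.toLp 2 (Fin.snoc x r : Fin (n + 1) → ℝ)

lemma fvec_add (x y : Fin n → ℝ) (r s : ℝ) :
    fvec x r + fvec y s = fvec (x + y) (r + s) := by
  ext j
  refine Fin.lastCases ?_ (fun j => ?_) j <;>
    simp [fvec, Fin.snoc_castSucc, Fin.snoc_last] <;> rfl

lemma fvec_smul (a : ℝ) (x : Fin n → ℝ) (r : ℝ) :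
    a • fvec x r = fvec (a • x) (a * r) := by
  ext j
  refine Fin.lastCases ?_ (fun j => ?_) j <;>
    simp [fvec, Fin.snoc_castSucc, Fin.snoc_last] <;> rfl

lemma fvec_zero : (fvec 0 0 : EuclideanSpace ℝ (Fin (n + 1))) = 0 := by
  ext j
  refine Fin.lastCases ?_ (fun j => ?_) j <;>
    simp [fvec, Fin.snoc_castSucc, Fin.snoc_last] <;> rfl

lemma fvec_sum {ι : Type*} (s : Finset ι) (x : ι → Fin n → ℝ) (r : ι → ℝ) :
    ∑ i ∈ s, fvec (x i) (r i) = fvec (∑ i ∈ s, x i) (∑ i ∈ s, r i) := by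
  induction s using Finset.cons_induction with
  | empty => simpa using fvec_zero.symm
  | cons i s hi ih => rw [Finset.sum_cons, Finset.sum_cons, Finset.sum_cons, ih, fvec_add]

lemma fvec_inj {x y : Fin n → ℝ} {r s : ℝ} (h : fvec x r = fvec y s) : x = y ∧ r = s := by
  constructor
  · funext j
    have := congrFun (congrArg WithLp.ofLp h) (Fin.castSucc j)
    simpa [fvec, Fin.snoc_castSucc] using this
  · have := congrFun (congrArg WithLp.ofLp h) (Fin.last n)
    simpa [fvec, Fin.snoc_last] using this

lemma fvec_inner (x y : Fin n → ℝ) (r s : ℝ) :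
    ⟪fvec x r, fvec y s⟫ = (∑ j, x j * y j) + r * s := by
  rw [PiLp.inner_apply]
  rw [Fin.sum_univ_castSucc]
  simp [fvec, Fin.snoc_castSucc, Fin.snoc_last, RCLike.inner_apply]
  exact congrArg₂ (· + ·) (Finset.sum_congr rfl fun j _ => mul_comm _ _) (mul_comm _ _)

lemma fvec_self (y : EuclideanSpace ℝ (Fin (n + 1))) :
    fvec (Fin.init y) (y (Fin.last n)) = y := by
  ext j
  refine Fin.lastCases ?_ (fun j => ?_) j <;>
    simp [fvec, Fin.snoc_castSucc, Fin.snoc_last, Fin.init]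

theorem farkas_affine (m n : ℕ)
    (A : Matrix (Fin m) (Fin n) ℝ) (b : Fin m → ℝ) (c : Fin n → ℝ) (δ : ℝ)
    (hsat : ∃ x : Fin n → ℝ, ∀ i, A.mulVec x i ≤ b i) :
    (∀ x : Fin n → ℝ, (∀ i, A.mulVec x i ≤ b i) → c ⬝ᵥ x ≤ δ) ↔
    (∃ lam : Fin m → ℝ, (∀ i, 0 ≤ lam i) ∧ A.vecMul lam = c ∧ lam ⬝ᵥ b ≤ δ) := by
  set v : Option (Fin m) → EuclideanSpace ℝ (Fin (n + 1)) := fun o =>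
    match o with
    | none => fvec 0 1
    | some i => fvec (A i) (b i) with hv
  have hmem : (∃ l : Option (Fin m) → ℝ, (∀ i, 0 ≤ l i) ∧
      (fvec c δ : EuclideanSpace ℝ (Fin (n + 1))) = ∑ i, l i • v i) ↔
      (∃ lam : Fin m → ℝ, (∀ i, 0 ≤ lam i) ∧ A.vecMul lam = c ∧ lam ⬝ᵥ b ≤ δ) := by
    have hsum : ∀ l : Option (Fin m) → ℝ,
        ∑ i, l i • v i =
          fvec ((l none • (0 : Fin n → ℝ)) + ∑ i, l (some i) • A i)
               ((l none * 1) + ∑ i, l (some i) * b i) := by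
      intro l
      rw [Fintype.sum_option]
      simp only [hv]
      rw [fvec_smul]
      have : ∀ i : Fin m, l (some i) • fvec (A i) (b i) = fvec (l (some i) • A i) (l (some i) * b i) :=
        fun i => fvec_smul _ _ _
      rw [Finset.sum_congr rfl (fun i _ => this i), fvec_sum, fvec_add]
    have hvecMul : ∀ lam : Fin m → ℝ, A.vecMul lam = ∑ i, lam i • A i := by
      intro lam
      funext j
      simp [Matrix.vecMul, dotProduct, Finset.sum_apply]
    constructor
    · rintro ⟨l, hl, heq⟩
      rw [hsum l] at heq
      obtain ⟨hc, hδ⟩ := fvec_inj heq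
      refine ⟨fun i => l (some i), fun i => hl _, ?_, ?_⟩
      · rw [hvecMul, hc]; simp
      · have h0 : 0 ≤ l none := hl none
        simp only [dotProduct]
        rw [hδ]; nlinarith [h0]
    · rintro ⟨lam, hlam, hA, hb⟩
      refine ⟨fun o => match o with | none => δ - lam ⬝ᵥ b | some i => lam i, ?_, ?_⟩
      · rintro (_ | i)
        · simpa using sub_nonneg.mpr hb
        · exact hlam i
      · rw [hsum]
        have e1 : ((δ - lam ⬝ᵥ b) • (0 : Fin n → ℝ) + ∑ i, lam i • A i) = c := by
          rw [← hA, hvecMul]; simp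
        have e2 : ((δ - lam ⬝ᵥ b) * 1 + ∑ i, lam i * b i) = δ := by
          simp [dotProduct]
        show fvec c δ = fvec ((δ - lam ⬝ᵥ b) • (0 : Fin n → ℝ) + ∑ i, lam i • A i)
          ((δ - lam ⬝ᵥ b) * 1 + ∑ i, lam i * b i)
        rw [e1, e2]
  constructor
  · intro h
    by_contra hno
    have hz := hmem.not.mpr hno
    obtain ⟨y, hy1, hy2⟩ := cone_sep v (fvec c δ) hz
    set u : Fin n → ℝ := Fin.init y with hu
    set t : ℝ := y (Fin.last n) with ht
    have hyv : y = fvec u t := (fvec_self y).symm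
    have h0 : 0 ≤ t := by
      have := hy1 none
      rw [hv] at this
      simp only at this
      rw [hyv, fvec_inner] at this
      simpa using this
    have h1 : ∀ i, 0 ≤ A.mulVec u i + b i * t := by
      intro i
      have := hy1 (some i)
      rw [hv] at this
      simp only at this
      rw [hyv, fvec_inner] at this
      simpa [Matrix.mulVec, dotProduct] using this
    have h2 : c ⬝ᵥ u + t * δ < 0 := by
      rw [hyv, fvec_inner] at hy2
      have : ∑ j, u j * c j = c ⬝ᵥ u := by
        simp [dotProduct, mul_comm]
      linarith [hy2, this ▸ hy2]
    rcases h0.eq_or_lt with h0' | h0'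
    · -- t = 0
      obtain ⟨x₀, hx₀⟩ := hsat
      have hcu : c ⬝ᵥ u < 0 := by rw [← h0'] at h2; simpa using h2
      set s : ℝ := max 0 ((δ + 1 - c ⬝ᵥ x₀) / (-(c ⬝ᵥ u))) with hs
      have hs0 : 0 ≤ s := le_max_left _ _
      have hAu : ∀ i, 0 ≤ A.mulVec u i := by
        intro i; have := h1 i; rw [← h0'] at this; simpa using this
      have hfeas : ∀ i, A.mulVec (x₀ - s • u) i ≤ b i := by
        intro i
        rw [A.mulVec_sub, A.mulVec_smul]
        have : 0 ≤ s * A.mulVec u i := mul_nonneg hs0 (hAu i)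
        have := hx₀ i
        simp only [Pi.sub_apply, Pi.smul_apply, smul_eq_mul]
        nlinarith [hx₀ i, mul_nonneg hs0 (hAu i)]
      have hle := h _ hfeas
      rw [dotProduct_sub, dotProduct_smul] at hle
      have hsge : (δ + 1 - c ⬝ᵥ x₀) / (-(c ⬝ᵥ u)) ≤ s := le_max_right _ _
      have hpos : 0 < -(c ⬝ᵥ u) := by linarith
      rw [div_le_iff₀ hpos] at hsge
      simp only [smul_eq_mul] at hle
      nlinarith
    · -- t > 0
      set x : Fin n → ℝ := (-t⁻¹) • u with hx
      have ht' : (0:ℝ) < t := h0'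
      have hfeas : ∀ i, A.mulVec x i ≤ b i := by
        intro i
        rw [hx, A.mulVec_smul]
        simp only [Pi.smul_apply, smul_eq_mul]
        have e : -t⁻¹ * (A.mulVec u) i = -((A.mulVec u) i) / t := by ring
        rw [e, div_le_iff₀ ht']
        linarith [h1 i]
      have hle := h x hfeas
      rw [hx, dotProduct_smul] at hle
      simp only [smul_eq_mul] at hle
      have e2 : -t⁻¹ * (c ⬝ᵥ u) = -(c ⬝ᵥ u) / t := by ring
      rw [e2, div_le_iff₀ ht'] at hle
      linarith
  · rintro ⟨lam, hlam, hA, hb⟩ x hx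
    have h1 : c ⬝ᵥ x = lam ⬝ᵥ A.mulVec x := by
      rw [Matrix.dotProduct_mulVec, hA]
    have h2 : lam ⬝ᵥ A.mulVec x ≤ lam ⬝ᵥ b := by
      simp only [dotProduct]
      exact Finset.sum_le_sum fun i _ => mul_le_mul_of_nonneg_left (hx i) (hlam i)
    linarith
end

section
/- The k-phase ranking template defines a well-founded relation: for any δ₁,…,δ_k > 0 and affine-linear functions f₁,…,f_k : ℝ^n → ℝ, the relation T consisting of pairs (x, x') satisfying (⋁ᵢ fᵢ(x) > 0) ∧ (f₁(x') < f₁(x) - δ₁) ∧ ⋀_{i=2}^k (fᵢ(x') < fᵢ(x) - δᵢ ∨ f_{i-1}(x) > 0) is well-founded. -/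
open Matrix

lemma eventually_nonpos_of_decreasing (g : ℕ → ℝ) (δ : ℝ) (hδ : 0 < δ) (M : ℕ)
    (hd : ∀ m, M ≤ m → g (m + 1) < g m - δ) :
    ∃ N, ∀ m, N ≤ m → g m ≤ 0 := by
  obtain ⟨p, hp⟩ := exists_nat_gt (g M / δ)
  have hstep : ∀ q, g (M + q) ≤ g M - q * δ := by
    intro q
    induction q with
    | zero => simp
    | succ q ih =>
      have := hd (M + q) (Nat.le_add_right _ _)
      push_cast
      calc g (M + (q + 1)) = g (M + q + 1) := by ring_nf
        _ ≤ g (M + q) - δ := le_of_lt this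
        _ ≤ g M - q * δ - δ := by linarith
        _ = g M - (q + 1) * δ := by ring
  have hmono : ∀ m, M + p ≤ m → g m ≤ g (M + p) := by
    intro m hm
    induction m with
    | zero => rw [show M + p = 0 by omega]
    | succ m ih =>
      rcases Nat.lt_or_ge (M + p) (m + 1) with h | h
      · have hm' : M + p ≤ m := by omega
        have := hd m (by omega)
        have := ih hm'
        linarith
      · have : m + 1 = M + p := le_antisymm h hm
        rw [this]
  refine ⟨M + p, fun m hm => ?_⟩
  have h1 := hmono m hm
  have h2 := hstep p
  have h3 : g M < p * δ := by
    rw [div_lt_iff₀ hδ] at hp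
    exact hp
  linarith

theorem multiphase_template_wellfounded (n k : ℕ) (hk : 0 < k)
    (s : Fin k → Fin n → ℝ) (t : Fin k → ℝ) (δ : Fin k → ℝ)
    (hδ : ∀ i, 0 < δ i) :
    ¬ ∃ u : ℕ → (Fin n → ℝ), ∀ m,
      (∃ i : Fin k, 0 < s i ⬝ᵥ u m + t i) ∧
      (s ⟨0, hk⟩ ⬝ᵥ u (m + 1) + t ⟨0, hk⟩ < s ⟨0, hk⟩ ⬝ᵥ u m + t ⟨0, hk⟩ - δ ⟨0, hk⟩) ∧
      (∀ i : Fin k, 0 < i.val →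
        s i ⬝ᵥ u (m + 1) + t i < s i ⬝ᵥ u m + t i - δ i ∨
        0 < s ⟨i.val - 1, Nat.lt_of_le_of_lt (Nat.sub_le _ _) i.isLt⟩ ⬝ᵥ u m
            + t ⟨i.val - 1, Nat.lt_of_le_of_lt (Nat.sub_le _ _) i.isLt⟩) := by
  rintro ⟨u, hu⟩
  set f : Fin k → ℕ → ℝ := fun i m => s i ⬝ᵥ u m + t i with hf
  have key : ∀ j : ℕ, ∀ hj : j < k, ∃ N, ∀ m, N ≤ m → f ⟨j, hj⟩ m ≤ 0 := by
    intro j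
    induction j with
    | zero =>
      intro hj
      apply eventually_nonpos_of_decreasing _ (δ ⟨0, hk⟩) (hδ _) 0
      intro m _
      exact (hu m).2.1
    | succ j ih =>
      intro hj
      obtain ⟨N, hN⟩ := ih (by omega)
      apply eventually_nonpos_of_decreasing _ (δ ⟨j + 1, hj⟩) (hδ _) N
      intro m hm
      have h3 := (hu m).2.2 ⟨j + 1, hj⟩ (by simp)
      rcases h3 with h | h
      · exact h
      · exfalso
        have := hN m hm
        simp only [hf] at this
        simp only [Nat.add_sub_cancel] at h
        linarith
  have hchoice : ∀ i : Fin k, ∃ N, ∀ m, N ≤ m → f i m ≤ 0 := by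
    intro i
    obtain ⟨N, hN⟩ := key i.val i.isLt
    exact ⟨N, fun m hm => by simpa using hN m hm⟩
  choose N hN using hchoice
  set M := Finset.univ.sup N with hM
  obtain ⟨i, hi⟩ := (hu M).1
  have := hN i M (Finset.le_sup (Finset.mem_univ i))
  simp only [hf] at this
  linarith
end

section
/- The k-piece ranking template defines a well-founded relation: for any δ > 0 and functions f₁,…,f_k, g₁,…,g_k : ℝ^n → ℝ, the relation T of pairs (x, x') satisfying ⋀_{i,j} (gᵢ(x) < 0 ∨ g_j(x') < 0 ∨ f_j(x') < fᵢ(x) - δ), ⋀ᵢ fᵢ(x) > 0, and ⋁ᵢ gᵢ(x) ≥ 0 is well-founded. -/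
theorem piecewise_template_wellfounded (n k : ℕ) (δ : ℝ) (hδ : 0 < δ)
    (f g : Fin k → (Fin n → ℝ) → ℝ) :
    ¬ ∃ u : ℕ → (Fin n → ℝ), ∀ m,
      (∀ i j : Fin k, g i (u m) < 0 ∨ g j (u (m + 1)) < 0 ∨
        f j (u (m + 1)) < f i (u m) - δ) ∧
      (∀ i : Fin k, 0 < f i (u m)) ∧
      (∃ i : Fin k, 0 ≤ g i (u m)) := by
  rintro ⟨u, hu⟩
  -- choose witness index with g i (u m) ≥ 0
  choose i hi using fun m => (hu m).2.2
  set a : ℕ → ℝ := fun m => f (i m) (u m) with ha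
  have hstep : ∀ m, a (m + 1) < a m - δ := by
    intro m
    rcases (hu m).1 (i m) (i (m + 1)) with h | h | h
    · exact absurd (hi m) (not_le.mpr h)
    · exact absurd (hi (m + 1)) (not_le.mpr h)
    · exact h
  have hpos : ∀ m, 0 < a m := fun m => (hu m).2.1 (i m)
  have hbound : ∀ m, a m ≤ a 0 - m * δ := by
    intro m
    induction m with
    | zero => simp
    | succ m ih =>
      have := hstep m
      push_cast
      nlinarith
  obtain ⟨m, hm⟩ := exists_nat_gt (a 0 / δ)
  have := hbound m
  have := hpos m
  rw [div_lt_iff₀ hδ] at hm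
  linarith
end

section
/- The k-lexicographic ranking template defines a well-founded relation: for any δ₁,…,δ_k > 0 and functions f₁,…,f_k : ℝ^n → ℝ, the relation T of pairs (x, x') satisfying ⋀ᵢ fᵢ(x) > 0, ⋀_{i=1}^{k-1} (fᵢ(x') ≤ fᵢ(x) ∨ ⋁_{j<i} f_j(x') < f_j(x) - δ_j), and ⋁_{i=1}^k fᵢ(x') < fᵢ(x) - δᵢ is well-founded. -/
private lemma ceil_div_lt_ceil_div {a b d : ℝ} (hd : 0 < d) (hb : 0 < b)
    (h : b < a - d) : ⌈b / d⌉₊ < ⌈a / d⌉₊ := by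
  have h1 : (⌈b / d⌉₊ : ℝ) < b / d + 1 :=
    Nat.ceil_lt_add_one (by positivity)
  have h2 : b / d + 1 ≤ a / d := by
    rw [div_add' _ _ _ hd.ne']
    gcongr
    linarith
  have h3 : (a / d : ℝ) ≤ ⌈a / d⌉₊ := Nat.le_ceil _
  exact_mod_cast h1.trans_le (h2.trans h3)

theorem lexicographic_template_wellfounded (n k : ℕ)
    (f : Fin k → (Fin n → ℝ) → ℝ) (δ : Fin k → ℝ) (hδ : ∀ i, 0 < δ i) :
    ¬ ∃ u : ℕ → (Fin n → ℝ), ∀ m,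
      (∀ i : Fin k, 0 < f i (u m)) ∧
      (∀ i : Fin k, i.val + 1 < k →
        (f i (u (m + 1)) ≤ f i (u m) ∨
         ∃ j : Fin k, j < i ∧ f j (u (m + 1)) < f j (u m) - δ j)) ∧
      (∃ i : Fin k, f i (u (m + 1)) < f i (u m) - δ i) := by
  rintro ⟨u, hu⟩
  set g : ℕ → Lex (Fin k → ℕ) := fun m => toLex (fun i => ⌈f i (u m) / δ i⌉₊) with hg
  have hdec : ∀ m, g (m + 1) < g m := by
    intro m
    obtain ⟨h1, h2, i0, hi0⟩ := hu m
    have h1' := (hu (m + 1)).1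
    -- the set of indices whose ceiling strictly decreases
    set S : Set (Fin k) := {i | ⌈f i (u (m + 1)) / δ i⌉₊ < ⌈f i (u m) / δ i⌉₊} with hS
    have hi0S : i0 ∈ S := ceil_div_lt_ceil_div (hδ i0) (h1' i0) hi0
    obtain ⟨i, hiS, hmin⟩ := (IsWellFounded.wf (r := ((· < ·) : Fin k → Fin k → Prop))).has_min S ⟨i0, hi0S⟩
    refine ⟨i, fun j hj => ?_, hiS⟩
    have hjk : j.val + 1 < k := Nat.lt_of_le_of_lt (Nat.succ_le_of_lt hj) i.isLt
    rcases h2 j hjk with hle | ⟨j', hj'j, hj'⟩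
    · have h1 : ⌈f j (u (m + 1)) / δ j⌉₊ ≤ ⌈f j (u m) / δ j⌉₊ :=
        Nat.ceil_le_ceil (by gcongr; exact (hδ j).le)
      have h2 : j ∉ S := fun h => hmin j h hj
      exact le_antisymm h1 (not_lt.mp h2)
    · exact (hmin j' (ceil_div_lt_ceil_div (hδ j') (h1' j') hj') (hj'j.trans hj)).elim
  exact (RelEmbedding.natGT g hdec).not_wellFounded
    (IsWellFounded.wf (r := ((· < ·) : Lex (Fin k → ℕ) → Lex (Fin k → ℕ) → Prop)))
end

section
/- The terminating program q > 0 ∧ q' = q + z - 1 ∧ z' = -z has no 1-phase (Podelski–Rybalchenko) linear ranking function: there is no affine-linear f(q,z) = a·q + b·z + c and δ > 0 such that for all (q,z,q',z') with q > 0, q' = q + z - 1, z' = -z, we have f(q,z) > 0 and f(q',z') < f(q,z) - δ. -/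
theorem no_linear_ranking_function_for_alternating_loop :
    ¬ ∃ (a b c δ : ℝ), 0 < δ ∧
      ∀ q z q' z' : ℝ, (0 < q ∧ q' = q + z - 1 ∧ z' = -z) →
        (0 < a * q + b * z + c ∧
         a * q' + b * z' + c < a * q + b * z + c - δ) := by
  rintro ⟨a, b, c, δ, hδ, h⟩
  have key : ∀ z : ℝ, (a - 2 * b) * z < a - δ := by
    intro z
    have := (h 1 z (1 + z - 1) (-z) ⟨one_pos, rfl, rfl⟩).2
    nlinarith [this]
  have h0 : 0 < a - δ := by have := key 0; linarith
  have hs : a - 2 * b = 0 := by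
    by_contra hne
    have := key ((a - δ + 1) / (a - 2 * b))
    rw [mul_div_cancel₀ _ hne] at this
    linarith
  have ha : a ≠ 0 := ne_of_gt (by linarith)
  have hpos := (h 1 ((-2 * (a + c) - 2) / a) (1 + (-2 * (a + c) - 2) / a - 1)
      (-((-2 * (a + c) - 2) / a)) ⟨one_pos, rfl, rfl⟩).1
  have hmul : a * ((-2 * (a + c) - 2) / a) = -2 * (a + c) - 2 :=
    mul_div_cancel₀ _ ha
  have hz : b * ((-2 * (a + c) - 2) / a) * 2 = a * ((-2 * (a + c) - 2) / a) := by
    have h2 : a = 2 * b := by linarith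
    rw [h2]; ring
  linarith [hpos, hz, hmul]
end

section
/- Every multiphase-ranked relation admits a ranking function bounded by ω·k: if T is any binary relation on ℝ^n contained in the k-phase template instance for functions f₁,…,f_k and step sizes δ₁,…,δ_k > 0, then the function ρ(x) = ω·(k−i) + ⌈fᵢ(x)/δᵢ⌉ (where i is minimal with fᵢ(x) > 0 and fⱼ(x) ≤ 0 for all j < i; ρ(x) = 0 if no such i) is an ordinal-valued ranking function for T with ρ(x) < ω·k for all x. -/
private lemma aux_lt (m m' p : ℕ) (h : m < m') :
    Ordinal.omega0 * (m : Ordinal) + (p : Ordinal) < Ordinal.omega0 * (m' : Ordinal) := by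
  have h1 : Ordinal.omega0 * (m : Ordinal) + (p : Ordinal)
      < Ordinal.omega0 * (m : Ordinal) + Ordinal.omega0 :=
    add_lt_add_right (Ordinal.nat_lt_omega0 p) _
  have h2 : Ordinal.omega0 * (m : Ordinal) + Ordinal.omega0
      = Ordinal.omega0 * ((m + 1 : ℕ) : Ordinal) := by
    push_cast
    rw [mul_add_one]
  have h3 : Ordinal.omega0 * ((m + 1 : ℕ) : Ordinal) ≤ Ordinal.omega0 * (m' : Ordinal) := by
    apply mul_le_mul_right
    exact_mod_cast Nat.cast_le.mpr h
  exact h1.trans_le (h2 ▸ h3)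

open scoped Classical in
noncomputable def multiphaseRank {n k : ℕ} (f : Fin k → (Fin n → ℝ) → ℝ)
    (δ : Fin k → ℝ) (x : Fin n → ℝ) : Ordinal :=
  if h : (Finset.univ.filter fun i : Fin k => 0 < f i x).Nonempty then
    let i := (Finset.univ.filter fun i : Fin k => 0 < f i x).min' h
    Ordinal.omega0 * ((k - 1 - i.val : ℕ) : Ordinal) + ((⌈f i x / δ i⌉₊ : ℕ) : Ordinal)
  else 0

theorem multiphase_rank_is_ranking_function {n k : ℕ} (hk : 0 < k)
    (f : Fin k → (Fin n → ℝ) → ℝ) (δ : Fin k → ℝ) (hδ : ∀ i, 0 < δ i)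
    (T : (Fin n → ℝ) → (Fin n → ℝ) → Prop)
    (hT : ∀ x x', T x x' →
      ((∃ i : Fin k, 0 < f i x) ∧
       (f ⟨0, hk⟩ x' < f ⟨0, hk⟩ x - δ ⟨0, hk⟩) ∧
       (∀ i : Fin k, 0 < i.val →
         f i x' < f i x - δ i ∨
         0 < f ⟨i.val - 1, Nat.lt_of_le_of_lt (Nat.sub_le _ _) i.isLt⟩ x))) :
    (∀ x x', T x x' → multiphaseRank f δ x' < multiphaseRank f δ x) ∧
    (∀ x, multiphaseRank f δ x < Ordinal.omega0 * (k : Ordinal)) := by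
  constructor
  · intro x x' hxx'
    obtain ⟨hex, h0, hrest⟩ := hT x x' hxx'
    have hne : (Finset.univ.filter fun i : Fin k => 0 < f i x).Nonempty := by
      obtain ⟨i, hi⟩ := hex
      exact ⟨i, by simp [hi]⟩
    set i := (Finset.univ.filter fun i : Fin k => 0 < f i x).min' hne with hi_def
    have hix : 0 < f i x := by
      have := Finset.min'_mem _ hne
      simpa using this
    have hmin : ∀ j : Fin k, 0 < f j x → i ≤ j := fun j hj =>
      Finset.min'_le _ _ (by simp [hj])
    -- claim A : f i x' < f i x - δ i
    have hA : f i x' < f i x - δ i := by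
      rcases Nat.eq_zero_or_pos i.val with h0' | hpos
      · have : i = ⟨0, hk⟩ := Fin.ext h0'
        rw [this]; exact h0
      · rcases hrest i hpos with h | h
        · exact h
        · exfalso
          have := hmin _ h
          simp [Fin.le_def] at this
          omega
    -- claim B : ∀ j with j.val < i.val, f j x' ≤ 0
    have hB : ∀ j : Fin k, j.val < i.val → ¬ (0 < f j x') := by
      intro j hj hjx'
      have hjx : ¬ (0 < f j x) := fun h => by
        have := hmin j h; rw [Fin.le_def] at this; omega
      rcases Nat.eq_zero_or_pos j.val with h0' | hpos
      · have hj0 : j = ⟨0, hk⟩ := Fin.ext h0'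
        rw [hj0] at hjx' hjx
        have := hδ ⟨0, hk⟩
        nlinarith [h0]
      · rcases hrest j hpos with h | h
        · have := hδ j; nlinarith
        · have := hmin _ h
          rw [Fin.le_def] at this
          simp at this
          omega
    rw [multiphaseRank, multiphaseRank, dif_pos hne]
    by_cases hne' : (Finset.univ.filter fun i : Fin k => 0 < f i x').Nonempty
    · rw [dif_pos hne']
      set i' := (Finset.univ.filter fun i : Fin k => 0 < f i x').min' hne' with hi'_def
      have hi'x' : 0 < f i' x' := by
        have := Finset.min'_mem _ hne'
        simpa using this
      have hii' : i.val ≤ i'.val := by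
        by_contra h
        exact hB i' (by omega) hi'x'
      rcases eq_or_lt_of_le hii' with heq | hlt
      · have heq' : i' = i := Fin.ext heq.symm
        rw [heq']
        apply add_lt_add_right
        rw [Nat.cast_lt]
        -- ⌈f i x' / δ i⌉₊ < ⌈f i x / δ i⌉₊
        have hd := hδ i
        have ha : (0:ℝ) ≤ f i x' / δ i := le_of_lt (div_pos (heq' ▸ hi'x') hd)
        have hab : f i x' / δ i < f i x / δ i - 1 := by
          rw [div_sub' (ne_of_gt hd)]
          exact div_lt_div_of_pos_right (by linarith) hd
        have h1 : (⌈f i x' / δ i⌉₊ : ℝ) < f i x / δ i :=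
          lt_trans (Nat.ceil_lt_add_one ha) (by linarith)
        have h2 : f i x / δ i ≤ (⌈f i x / δ i⌉₊ : ℝ) := Nat.le_ceil _
        exact_mod_cast lt_of_lt_of_le h1 h2
      · -- i < i' : first component drops
        have hm : k - 1 - i'.val < k - 1 - i.val := by
          have := i'.isLt; omega
        calc Ordinal.omega0 * ((k - 1 - i'.val : ℕ) : Ordinal) + ((⌈f i' x' / δ i'⌉₊ : ℕ) : Ordinal)
            < Ordinal.omega0 * ((k - 1 - i.val : ℕ) : Ordinal) := aux_lt _ _ _ hm
          _ ≤ _ := le_self_add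
    · rw [dif_neg hne']
      have hc : 0 < ⌈f i x / δ i⌉₊ := Nat.ceil_pos.mpr (div_pos hix (hδ i))
      calc (0 : Ordinal) < ((⌈f i x / δ i⌉₊ : ℕ) : Ordinal) := by exact_mod_cast hc
        _ ≤ _ := le_add_self
  · intro x
    rw [multiphaseRank]
    by_cases hne : (Finset.univ.filter fun i : Fin k => 0 < f i x).Nonempty
    · rw [dif_pos hne]
      exact aux_lt _ _ _ (by have := ((Finset.univ.filter fun i : Fin k => 0 < f i x).min' hne).isLt; omega)
    · rw [dif_neg hne]
      apply mul_pos Ordinal.omega0_pos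
      exact_mod_cast hk
end
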